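/- Let p be an odd prime. Then the second moment of the family y² = x³ + (T+1)x² + Tx equals p² − 2p − 1; that is, Σ_{t=0}^{p−1} ( Σ_{x=0}^{p−1} ((x³ + (t+1)x² + t·x)/p) )² = p² − 2p − 1. -/

import Mathlib

/-!
Since `x³ + (t+1)x² + tx = x(x+1)(x+t)`, the inner sum is `∑ₓ a(x) χ(x+t)` with `χ` the quadratic
character of `𝔽_p` and `a(x) = χ(x(x+1))`. Squaring and summing over `t` first, the correlations
`∑ₜ χ(x+t) χ(y+t)` are `p - 1` for `x = y` and `-1` otherwise, so the second moment is
`p ∑ a² - (∑ a)²`. Both remaining sums are shifted Jacobi sums: `∑ a = χ(-1) J(χ, χ) = -1` and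
`∑ a² = J(1, 1) = p - 2`.
-/

open Finset

section ShiftedCharacterSums

variable {F R : Type*} [Field F] [Fintype F] [CommRing R]

lemma sum_mulChar_mul_add_eq_jacobiSum (χ ψ : MulChar F R) {c : F} (hc : c ≠ 0) :
    ∑ t : F, χ t * ψ (t + c) = χ (-c) * ψ c * jacobiSum χ ψ := by
  -- substitute `t = -c s`
  rw [jacobiSum, mul_sum, ← Equiv.sum_comp (Equiv.mulLeft₀ (-c) (neg_ne_zero.2 hc))]
  refine sum_congr rfl fun s _ => ?_
  rw [Equiv.mulLeft₀_apply, show -c * s + c = c * (1 - s) by ring, map_mul, map_mul]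
  ring

variable [DecidableEq F]

lemma quadraticChar_sum_sq : ∑ t : F, quadraticChar F t ^ 2 = Fintype.card F - 1 := by
  simp_rw [← MulChar.pow_apply' _ two_ne_zero, (quadraticChar_isQuadratic F).sq_eq_one,
    MulChar.sum_one_eq_card_units, Fintype.card_units, Nat.cast_pred Fintype.card_pos]

lemma quadraticChar_sum_mul_add (hF : ringChar F ≠ 2) {c : F} (hc : c ≠ 0) :
    ∑ t : F, quadraticChar F t * quadraticChar F (t + c) = -1 := by
  have hJ : jacobiSum (quadraticChar F) (quadraticChar F) = -quadraticChar F (-1) := by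
    simpa only [(quadraticChar_isQuadratic F).inv] using
      jacobiSum_nontrivial_inv (quadraticChar_ne_one hF)
  rw [sum_mulChar_mul_add_eq_jacobiSum _ _ hc, hJ, neg_eq_neg_one_mul c, map_mul]
  have hneg : (-1 : F) ≠ 0 := neg_ne_zero.2 one_ne_zero
  linear_combination (-quadraticChar F c ^ 2) * quadraticChar_sq_one hneg - quadraticChar_sq_one hc

lemma quadraticChar_sum_add_mul_add (hF : ringChar F ≠ 2) (x y : F) :
    ∑ t : F, quadraticChar F (x + t) * quadraticChar F (y + t)
      = (if x = y then (Fintype.card F : ℤ) else 0) - 1 := by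
  rw [Fintype.sum_equiv (Equiv.addLeft x) _
    (fun s => quadraticChar F s * quadraticChar F (s + (y - x))) fun t => by
      simp only [Equiv.coe_addLeft]; congr 2; abel]
  split_ifs with h
  · simpa only [h, if_true, sub_self, add_zero, ← sq] using quadraticChar_sum_sq
  · simpa using quadraticChar_sum_mul_add hF (sub_ne_zero.2 (Ne.symm h))

lemma sum_sq_sum_mul_quadraticChar_add (hF : ringChar F ≠ 2) (a : F → ℤ) :
    ∑ t : F, (∑ x : F, a x * quadraticChar F (x + t)) ^ 2
      = Fintype.card F * ∑ x : F, a x ^ 2 - (∑ x : F, a x) ^ 2 := calc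
  _ = ∑ x : F, ∑ y : F,
        a x * a y * ∑ t : F, quadraticChar F (x + t) * quadraticChar F (y + t) := by
    simp_rw [sq, sum_mul_sum, mul_sum]
    rw [sum_comm]
    refine sum_congr rfl fun x _ => ?_
    rw [sum_comm]
    exact sum_congr rfl fun y _ => sum_congr rfl fun t _ => by ring
  _ = _ := by
    simp_rw [quadraticChar_sum_add_mul_add hF, mul_sub, mul_ite, mul_zero, mul_one,
      sum_sub_distrib, sum_ite_eq, mem_univ, if_true, sq, sum_mul_sum]
    simp_rw [mul_sum, mul_comm]

lemma quadraticChar_sum_mul_add_one (hF : ringChar F ≠ 2) :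
    ∑ x : F, quadraticChar F (x * (x + 1)) = -1 := by
  simpa only [map_mul] using quadraticChar_sum_mul_add hF one_ne_zero

lemma quadraticChar_sum_sq_mul_add_one :
    ∑ x : F, quadraticChar F (x * (x + 1)) ^ 2 = Fintype.card F - 2 := by
  simp_rw [← MulChar.pow_apply' _ two_ne_zero, (quadraticChar_isQuadratic F).sq_eq_one, map_mul]
  rw [sum_mulChar_mul_add_eq_jacobiSum _ _ one_ne_zero, jacobiSum_one_one]
  simp [MulChar.one_apply isUnit_one.neg]

end ShiftedCharacterSums

lemma ZMod.sum_range_natCast {M : Type*} [AddCommMonoid M] (n : ℕ) [NeZero n] (f : ZMod n → M) :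
    ∑ i ∈ range n, f i = ∑ x : ZMod n, f x := by
  refine sum_nbij' (↑) ZMod.val (fun _ _ => mem_univ _) (fun x _ => mem_range.2 x.val_lt)
    (fun i hi => ZMod.val_cast_of_lt (mem_range.1 hi)) (fun x _ => ZMod.natCast_zmod_val x)
    (fun _ _ => rfl)

/-- For an odd prime `p`, the second moment of the family
`y² = x³ + (T+1)x² + Tx` equals `p² − 2p − 1`. -/
theorem second_moment_T_plus_one_family (p : ℕ) [Fact p.Prime] (hodd : p ≠ 2) :
    ∑ t ∈ Finset.range p,
        (∑ x ∈ Finset.range p,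
            legendreSym p ((x : ℤ) ^ 3 + ((t : ℤ) + 1) * (x : ℤ) ^ 2 + (t : ℤ) * (x : ℤ))) ^ 2
      = (p : ℤ) ^ 2 - 2 * p - 1 := by
  have hF : ringChar (ZMod p) ≠ 2 := by rwa [ZMod.ringChar_zmod_n]
  have hfactor (t x : ℕ) :
      legendreSym p ((x : ℤ) ^ 3 + ((t : ℤ) + 1) * (x : ℤ) ^ 2 + (t : ℤ) * (x : ℤ))
        = quadraticChar (ZMod p) ((x : ZMod p) * (x + 1)) * quadraticChar (ZMod p) (x + t) := by
    rw [legendreSym, ← map_mul]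
    push_cast
    ring_nf
  simp only [hfactor]
  rw [ZMod.sum_range_natCast p fun t => (∑ x ∈ range p,
      quadraticChar (ZMod p) ((x : ZMod p) * (x + 1)) * quadraticChar (ZMod p) (x + t)) ^ 2]
  simp only [fun t : ZMod p => ZMod.sum_range_natCast p fun x =>
    quadraticChar (ZMod p) (x * (x + 1)) * quadraticChar (ZMod p) (x + t)]
  rw [sum_sq_sum_mul_quadraticChar_add hF, quadraticChar_sum_sq_mul_add_one,
    quadraticChar_sum_mul_add_one hF, ZMod.card]
  ring
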